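/- arXiv:1803.01954 — 3 statements merged into one kernel-verified Lean document; each statement's English description precedes it below -/
import Mathlib

section
/- Let r be a positive integer (or any nonzero complex number), let (w_n) be a sequence of nonzero complex numbers with w_n → 0, and let (δ_n) be a sequence of complex numbers with δ_n → 0, such that w_{n+1} = w_n − r·w_n² + w_n²·δ_n for all n. Then n·w_n → 1/r as n → ∞. In particular, when r > 0, the sequence (w_n) converges to 0 tangentially to the positive real axis: w_n/|w_n| → 1. -/
open Filter Topology

/-- Leau–Fatou flower-type asymptotics: if `r ≠ 0`, `(wₙ)` is a sequence of nonzero complex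
numbers tending to `0` with `w_{n+1} = wₙ − r·wₙ² + wₙ²·δₙ` where `δₙ → 0`, then
`n·wₙ → 1/r`. In particular, when `r` is a positive real number (e.g. a positive integer),
`wₙ` converges to `0` tangentially to the positive real axis: `wₙ/|wₙ| → 1`. -/
theorem leau_fatou_asymptotics (r : ℂ) (hr : r ≠ 0) (w δ : ℕ → ℂ)
    (hw0 : ∀ n, w n ≠ 0) (hwlim : Tendsto w atTop (𝓝 0))
    (hδ : Tendsto δ atTop (𝓝 0))
    (hrec : ∀ n, w (n + 1) = w n - r * w n ^ 2 + w n ^ 2 * δ n) :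
    Tendsto (fun n : ℕ => (n : ℂ) * w n) atTop (𝓝 (1 / r)) ∧
    (r.im = 0 → 0 < r.re →
      Tendsto (fun n => w n / (‖w n‖ : ℂ)) atTop (𝓝 1)) := by
  set u : ℕ → ℂ := fun n => (w n)⁻¹ with hu
  set c : ℕ → ℂ := fun n => 1 - r * w n + w n * δ n with hc
  have hfact : ∀ n, w (n + 1) = w n * c n := by
    intro n; rw [hrec n]; ring
  have hcne : ∀ n, c n ≠ 0 := by
    intro n hcn
    have := hfact n
    rw [hcn, mul_zero] at this
    exact hw0 (n + 1) this
  have hclim : Tendsto c atTop (𝓝 1) := by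
    have : Tendsto (fun n => 1 - r * w n + w n * δ n) atTop (𝓝 (1 - r * 0 + 0 * 0)) :=
      (tendsto_const_nhds.sub (tendsto_const_nhds.mul hwlim)).add (hwlim.mul hδ)
    simpa using this
  -- difference of reciprocals
  have hdiff : ∀ n, u (n + 1) - u n = (r - δ n) / c n := by
    intro n
    have hwn := hw0 n
    have hcn := hcne n
    show (w (n + 1))⁻¹ - (w n)⁻¹ = (r - δ n) / c n
    rw [hfact n, eq_div_iff hcn]
    have h1 : c n * (c n)⁻¹ = 1 := mul_inv_cancel₀ hcn
    have h2 : w n * (w n)⁻¹ = 1 := mul_inv_cancel₀ hwn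
    have hc' : c n = 1 - r * w n + w n * δ n := rfl
    clear_value u c
    linear_combination (w n)⁻¹ * h1 - (w n)⁻¹ * hc' + (r - δ n) * h2
  have hdlim : Tendsto (fun n => u (n + 1) - u n) atTop (𝓝 r) := by
    have : Tendsto (fun n => (r - δ n) / c n) atTop (𝓝 ((r - 0) / 1)) :=
      (tendsto_const_nhds.sub hδ).div hclim one_ne_zero
    simp only [sub_zero, div_one] at this
    simpa only [hdiff]
  -- Cesàro
  have hces : Tendsto (fun n : ℕ => (n⁻¹ : ℝ) • ∑ i ∈ Finset.range n, (u (i + 1) - u i))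
      atTop (𝓝 r) := hdlim.cesaro_smul
  have hsum : ∀ n, ∑ i ∈ Finset.range n, (u (i + 1) - u i) = u n - u 0 := by
    intro n; exact Finset.sum_range_sub u n
  have hulim : Tendsto (fun n : ℕ => ((n : ℂ))⁻¹ * u n) atTop (𝓝 r) := by
    have h1 : Tendsto (fun n : ℕ => (n⁻¹ : ℝ) • (u n - u 0)) atTop (𝓝 r) := by
      simpa only [hsum] using hces
    have h2 : Tendsto (fun n : ℕ => (n⁻¹ : ℝ) • u 0) atTop (𝓝 ((0 : ℝ) • u 0)) := by
      exact (tendsto_inv_atTop_nhds_zero_nat.smul_const (u 0))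
    have h3 := h1.add h2
    rw [zero_smul, add_zero] at h3
    have heq : ∀ n : ℕ, (n⁻¹ : ℝ) • (u n - u 0) + (n⁻¹ : ℝ) • u 0 = ((n : ℂ))⁻¹ * u n := by
      intro n
      rw [← smul_add, sub_add_cancel]
      push_cast [Complex.real_smul]
      ring
    simpa only [heq] using h3
  have main : Tendsto (fun n : ℕ => (n : ℂ) * w n) atTop (𝓝 (1 / r)) := by
    have hinv := hulim.inv₀ hr
    rw [one_div]
    refine hinv.congr' ?_
    filter_upwards [Ici_mem_atTop 1] with n hn
    have hn1 : 1 ≤ n := hn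
    have hn0 : (n : ℂ) ≠ 0 := Nat.cast_ne_zero.2 (by omega)
    rw [mul_inv, inv_inv, hu]
    simp [inv_inv]
  refine ⟨main, fun him hre => ?_⟩
  -- tangential convergence
  have hrpos : (0 : ℝ) < r.re := hre
  have hr1 : (1 / r : ℂ) = ((1 / r.re : ℝ) : ℂ) := by
    have : r = ((r.re : ℝ) : ℂ) := Complex.ext rfl (by simpa using him)
    rw [this]; push_cast; rfl
  have hcont : Tendsto (fun z : ℂ => z / (‖z‖ : ℂ)) (𝓝 (1 / r)) (𝓝 1) := by
    have hne : (1 / r : ℂ) ≠ 0 := one_div_ne_zero hr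
    have : ContinuousAt (fun z : ℂ => z / (‖z‖ : ℂ)) (1 / r) := by
      apply ContinuousAt.div continuousAt_id
      · exact Complex.continuous_ofReal.continuousAt.comp continuous_norm.continuousAt
      · simpa [Complex.ofReal_eq_zero] using norm_ne_zero_iff.2 hne
    have hval : (1 / r : ℂ) / (‖(1 / r : ℂ)‖ : ℂ) = 1 := by
      rw [hr1]
      have h1 : (0 : ℝ) < 1 / r.re := by positivity
      rw [Complex.norm_real, Real.norm_of_nonneg h1.le]
      rw [div_self]
      simpa [Complex.ofReal_eq_zero] using h1.ne'
    simpa only [ContinuousAt, hval] using this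
  have := hcont.comp main
  refine this.congr' ?_
  filter_upwards [Ici_mem_atTop 1] with n hn
  have hn1 : 1 ≤ n := hn
  have hnp : (0 : ℝ) < (n : ℝ) := by exact_mod_cast Nat.pos_of_ne_zero (by omega)
  have hn0 : (n : ℂ) ≠ 0 := Nat.cast_ne_zero.2 (by omega)
  have hnorm : ‖(n : ℂ) * w n‖ = (n : ℝ) * ‖w n‖ := by
    rw [norm_mul, Complex.norm_natCast]
  simp only [Function.comp_apply, hnorm]
  push_cast
  rw [mul_div_mul_left _ _ hn0]
end

section
/- Let r, m be natural numbers with r ≥ 1, and let (z_n) and (u_n) be sequences of nonzero complex numbers. Set w_n = z_n^r·u_n^m, and suppose: w_n → 0; w_n/|w_n| → 1 (the w_n converge to 0 tangentially to the positive real axis); u_n → 0; and there exist complex sequences (δ_n) → 0 and (γ_n) → 0 such that z_{n+1} = z_n·(1 − w_n + w_n·δ_n) and u_{n+1} = u_n·(1 + w_n·γ_n) for all n. Then for every natural number N there exist a constant C > 0 and an index n₀ such that |z_n| ≤ C·|u_n|^N for all n ≥ n₀. -/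
open Filter Topology

theorem num_bound (w d : ℂ) (hw : ‖w‖ ≤ 1/2) (hre : (3/4) * ‖w‖ ≤ w.re) (hd : ‖d‖ ≤ 1/4) :
    ‖1 - w + w * d‖ ≤ 1 - ‖w‖ / 4 := by
  have hw0 : (0:ℝ) ≤ ‖w‖ := norm_nonneg _
  have h1 : ‖(1:ℂ) - w‖ ≤ 1 - ‖w‖ / 2 := by
    have hns : Complex.normSq (1 - w) = 1 - 2 * w.re + ‖w‖^2 := by
      rw [Complex.normSq_sub]
      simp [Complex.normSq_eq_norm_sq, Complex.mul_re]
      ring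
    have h2 : ‖(1:ℂ) - w‖^2 ≤ (1 - ‖w‖/2)^2 := by
      rw [Complex.sq_norm, hns]; nlinarith [sq_nonneg ‖w‖]
    nlinarith [norm_nonneg ((1:ℂ) - w)]
  calc ‖1 - w + w * d‖ ≤ ‖(1:ℂ) - w‖ + ‖w * d‖ := norm_add_le _ _
    _ ≤ (1 - ‖w‖/2) + ‖w‖ * ‖d‖ := by rw [norm_mul]; linarith
    _ ≤ 1 - ‖w‖/4 := by nlinarith

theorem den_bound (N : ℕ) (w g : ℂ) (hw : ‖w‖ ≤ 1/2) (hg : ‖g‖ ≤ 1/(8*(N+1))) :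
    1 - ‖w‖ / 8 ≤ ‖1 + w * g‖ ^ N := by
  have hw0 : (0:ℝ) ≤ ‖w‖ := norm_nonneg _
  have hg0 : (0:ℝ) ≤ ‖g‖ := norm_nonneg _
  have hN : (0:ℝ) < 8*(N+1) := by positivity
  have hg8 : ‖g‖ ≤ 1/8 := by
    refine hg.trans ?_
    rw [div_le_div_iff₀ hN (by norm_num : (0:ℝ) < 8)]
    nlinarith [Nat.cast_nonneg (α := ℝ) N]
  have hprod : ‖w‖ * ‖g‖ ≤ 1/16 := by nlinarith
  have hp0 : (0:ℝ) ≤ ‖w‖ * ‖g‖ := by positivity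
  have h1 : 1 - ‖w‖ * ‖g‖ ≤ ‖1 + w * g‖ := by
    have := norm_sub_norm_le (1 : ℂ) (-(w*g))
    rw [sub_neg_eq_add, norm_one, norm_neg, norm_mul] at this
    linarith
  have h2 : (1 - ‖w‖ * ‖g‖ : ℝ) ^ N ≤ ‖1 + w * g‖ ^ N :=
    pow_le_pow_left₀ (by linarith) h1 N
  refine le_trans ?_ h2
  have hb := one_add_mul_le_pow (a := -(‖w‖ * ‖g‖)) (by linarith) N
  rw [← sub_eq_add_neg, mul_neg, ← sub_eq_add_neg] at hb
  refine le_trans ?_ hb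
  have hgN : (N:ℝ) * ‖g‖ ≤ 1/8 := by
    calc (N:ℝ) * ‖g‖ ≤ (N:ℝ) * (1/(8*(N+1))) :=
          mul_le_mul_of_nonneg_left hg (Nat.cast_nonneg N)
      _ ≤ 1/8 := by
          rw [mul_one_div, div_le_div_iff₀ hN (by norm_num : (0:ℝ) < 8)]
          nlinarith [Nat.cast_nonneg (α := ℝ) N]
  nlinarith

/-- Asymptotic comparison lemma: let `r ≥ 1`, `m ∈ ℕ`, and let `(zₙ)`, `(uₙ)` be sequences of
nonzero complex numbers with `wₙ = zₙ^r·uₙ^m → 0` tangentially to the positive real axis,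
`uₙ → 0`, and `z_{n+1} = zₙ(1 − wₙ + wₙδₙ)`, `u_{n+1} = uₙ(1 + wₙγₙ)` for some sequences
`δₙ → 0`, `γₙ → 0`. Then for every `N ∈ ℕ` there are `C > 0` and `n₀` such that
`|zₙ| ≤ C·|uₙ|^N` for all `n ≥ n₀`: the orbit `(zₙ, uₙ)` is asymptotic to `{z = 0}`. -/
theorem orbit_asymptotic_to_z_eq_zero (r m : ℕ) (hr : 1 ≤ r) (z u δ γ : ℕ → ℂ)
    (hz0 : ∀ n, z n ≠ 0) (hu0 : ∀ n, u n ≠ 0)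
    (hwlim : Tendsto (fun n => z n ^ r * u n ^ m) atTop (𝓝 0))
    (hwtan : Tendsto (fun n => (z n ^ r * u n ^ m) / (‖z n ^ r * u n ^ m‖ : ℂ))
      atTop (𝓝 1))
    (hulim : Tendsto u atTop (𝓝 0))
    (hδ : Tendsto δ atTop (𝓝 0)) (hγ : Tendsto γ atTop (𝓝 0))
    (hzrec : ∀ n, z (n + 1) =
      z n * (1 - z n ^ r * u n ^ m + (z n ^ r * u n ^ m) * δ n))
    (hurec : ∀ n, u (n + 1) = u n * (1 + (z n ^ r * u n ^ m) * γ n)) :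
    ∀ N : ℕ, ∃ C > (0 : ℝ), ∃ n₀ : ℕ, ∀ n ≥ n₀, ‖z n‖ ≤ C * ‖u n‖ ^ N := by
  intro N
  set w : ℕ → ℂ := fun n => z n ^ r * u n ^ m with hw_def
  have hwne : ∀ n, w n ≠ 0 := fun n =>
    mul_ne_zero (pow_ne_zero _ (hz0 n)) (pow_ne_zero _ (hu0 n))
  -- eventually conditions
  have E1 : ∀ᶠ n in atTop, ‖w n‖ ≤ 1/2 := by
    have := hwlim.norm
    rw [norm_zero] at this
    exact (this.eventually_lt_const (by norm_num : (0:ℝ) < 1/2)).mono fun n h => h.le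
  have E2 : ∀ᶠ n in atTop, (3/4) * ‖w n‖ ≤ (w n).re := by
    have hre : Tendsto (fun n => ((w n) / (‖w n‖ : ℂ)).re) atTop (𝓝 1) := by
      have h := (Complex.continuous_re.tendsto 1).comp hwtan
      rw [Complex.one_re] at h
      exact h
    have := hre.eventually_const_lt (by norm_num : (3/4 : ℝ) < 1)
    refine this.mono fun n h => ?_
    have hwpos : (0:ℝ) < ‖w n‖ := norm_pos_iff.mpr (hwne n)
    have : ((w n) / (‖w n‖ : ℂ)).re = (w n).re / ‖w n‖ := by
      rw [Complex.div_ofReal_re]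
    rw [this] at h
    rw [lt_div_iff₀ hwpos] at h
    linarith
  have E3 : ∀ᶠ n in atTop, ‖δ n‖ ≤ 1/4 := by
    have := hδ.norm; rw [norm_zero] at this
    exact (this.eventually_lt_const (by norm_num : (0:ℝ) < 1/4)).mono fun n h => h.le
  have E4 : ∀ᶠ n in atTop, ‖γ n‖ ≤ 1/(8*(N+1)) := by
    have := hγ.norm; rw [norm_zero] at this
    exact (this.eventually_lt_const (by positivity : (0:ℝ) < 1/(8*(N+1)))).mono
      fun n h => h.le
  obtain ⟨n₀, hn₀⟩ := eventually_atTop.mp (((E1.and E2).and E3).and E4)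
  -- one-step monotonicity of the ratio
  have step : ∀ n ≥ n₀, ‖z (n+1)‖ / ‖u (n+1)‖^N ≤ ‖z n‖ / ‖u n‖^N := by
    intro n hn
    obtain ⟨⟨⟨h1, h2⟩, h3⟩, h4⟩ := hn₀ n hn
    have hA : ‖(1:ℂ) - w n + w n * δ n‖ ≤ 1 - ‖w n‖/4 := num_bound _ _ h1 h2 h3
    have hB : 1 - ‖w n‖/8 ≤ ‖(1:ℂ) + w n * γ n‖ ^ N := den_bound N _ _ h1 h4
    have hz1 : ‖z (n+1)‖ = ‖z n‖ * ‖(1:ℂ) - w n + w n * δ n‖ := by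
      rw [hzrec n, norm_mul]
    have hu1 : ‖u (n+1)‖^N = ‖u n‖^N * ‖(1:ℂ) + w n * γ n‖^N := by
      rw [hurec n, norm_mul, mul_pow]
    have hupos : (0:ℝ) < ‖u n‖^N := pow_pos (norm_pos_iff.mpr (hu0 n)) N
    have hupos1 : (0:ℝ) < ‖u (n+1)‖^N := pow_pos (norm_pos_iff.mpr (hu0 (n+1))) N
    rw [div_le_div_iff₀ hupos1 hupos, hz1, hu1]
    have hzn : (0:ℝ) ≤ ‖z n‖ := norm_nonneg _
    have hun : (0:ℝ) ≤ ‖u n‖^N := hupos.le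
    have hAB : ‖(1:ℂ) - w n + w n * δ n‖ ≤ ‖(1:ℂ) + w n * γ n‖^N := by
      have hwnn : (0:ℝ) ≤ ‖w n‖ := norm_nonneg _
      linarith
    calc ‖z n‖ * ‖(1:ℂ) - w n + w n * δ n‖ * ‖u n‖^N
        ≤ ‖z n‖ * ‖(1:ℂ) + w n * γ n‖^N * ‖u n‖^N := by
          apply mul_le_mul_of_nonneg_right _ hun
          exact mul_le_mul_of_nonneg_left hAB hzn
      _ = ‖z n‖ * (‖u n‖^N * ‖(1:ℂ) + w n * γ n‖^N) := by ring
  -- descending induction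
  have key : ∀ n ≥ n₀, ‖z n‖ / ‖u n‖^N ≤ ‖z n₀‖ / ‖u n₀‖^N := by
    intro n hn
    induction n, hn using Nat.le_induction with
    | base => exact le_refl _
    | succ k hk ih => exact (step k hk).trans ih
  have hC : (0:ℝ) < ‖z n₀‖ / ‖u n₀‖^N :=
    div_pos (norm_pos_iff.mpr (hz0 n₀)) (pow_pos (norm_pos_iff.mpr (hu0 n₀)) N)
  refine ⟨_, hC, n₀, fun n hn => ?_⟩
  have hupos : (0:ℝ) < ‖u n‖^N := pow_pos (norm_pos_iff.mpr (hu0 n)) N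
  exact (div_le_iff₀ hupos).mp (key n hn)
end

section
/- Let Q : ℂ² → ℂ² be the quadratic homogeneous map Q(x,t) = (x² + (π²/4)·x·t, −x·t − (π²/4)·t²). Then for every v = (v₁, v₂) ∈ ℂ² with v ≠ (0,0), there exists λ ∈ ℂ with Q(v) = λ·v if and only if v₂ = 0, or v₁ = 0, or v₁ + (π²/4)·v₂ = 0. Thus Q has exactly three characteristic directions [1:0], [0:1] and [−π²/4 : 1]; moreover [1:0] and [0:1] are non-degenerate (Q(1,0) = 1·(1,0) and Q(0,1) = (−π²/4)·(0,1) with nonzero eigenvalue) while [−π²/4 : 1] is degenerate (Q(−π²/4, 1) = (0,0)). -/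
noncomputable section

/-- The quadratic homogeneous map `Q(x,t) = (x² + (π²/4)xt, −xt − (π²/4)t²)`, the quadratic
part of the blow-up transform of the Astorg et al. polynomial diffeomorphisms at the point of
the exceptional divisor corresponding to the direction `[1:0]`. -/
def Q : ℂ × ℂ → ℂ × ℂ := fun p =>
  (p.1 ^ 2 + ((Real.pi : ℂ) ^ 2 / 4) * p.1 * p.2,
    -(p.1 * p.2) - ((Real.pi : ℂ) ^ 2 / 4) * p.2 ^ 2)

lemma pi4_ne : ((Real.pi : ℂ) ^ 2 / 4) ≠ 0 := by
  have h : (Real.pi : ℂ) ≠ 0 := by exact_mod_cast Real.pi_ne_zero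
  simp [div_eq_zero_iff, pow_eq_zero_iff, h]

lemma char_aux (a v1 v2 : ℂ) :
    ((∃ c : ℂ, v1 ^ 2 + a * v1 * v2 = c * v1 ∧ -(v1 * v2) - a * v2 ^ 2 = c * v2) ↔
      v2 = 0 ∨ v1 = 0 ∨ v1 + a * v2 = 0) := by
  constructor
  · rintro ⟨c, h1, h2⟩
    by_cases hv2 : v2 = 0
    · exact Or.inl hv2
    by_cases hv1 : v1 = 0
    · exact Or.inr (Or.inl hv1)
    right; right
    have e1 : c = v1 + a * v2 := by
      have : v1 * (v1 + a * v2 - c) = 0 := by linear_combination h1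
      rcases mul_eq_zero.mp this with h | h
      · exact absurd h hv1
      · linear_combination -h
    have e2 : c = -(v1 + a * v2) := by
      have : v2 * (v1 + a * v2 + c) = 0 := by linear_combination -h2
      rcases mul_eq_zero.mp this with h | h
      · exact absurd h hv2
      · linear_combination h
    have h2' : (2 : ℂ) * (v1 + a * v2) = 0 := by linear_combination e2 - e1
    exact (mul_eq_zero.mp h2').resolve_left two_ne_zero
  · rintro (h | h | h)
    · exact ⟨v1, by subst h; constructor <;> ring⟩
    · exact ⟨-(a * v2), by subst h; constructor <;> ring⟩
    · have hv : v1 = -(a * v2) := by linear_combination h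
      exact ⟨0, by subst hv; constructor <;> ring⟩

/-- A nonzero `v = (v₁,v₂) ∈ ℂ²` satisfies `Q(v) = λ·v` for some `λ ∈ ℂ` iff `v₂ = 0`, or
`v₁ = 0`, or `v₁ + (π²/4)v₂ = 0`; so `Q` has exactly three characteristic directions `[1:0]`,
`[0:1]` and `[−π²/4 : 1]`. Moreover `[1:0]` and `[0:1]` are non-degenerate:
`Q(1,0) = 1·(1,0)` and `Q(0,1) = (−π²/4)·(0,1)` with nonzero eigenvalues, while
`[−π²/4 : 1]` is degenerate: `Q(−π²/4, 1) = (0,0)`. -/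
theorem characteristic_directions_of_Q :
    (∀ v : ℂ × ℂ, v ≠ 0 →
      ((∃ c : ℂ, Q v = c • v) ↔
        v.2 = 0 ∨ v.1 = 0 ∨ v.1 + ((Real.pi : ℂ) ^ 2 / 4) * v.2 = 0)) ∧
    Q (1, 0) = (1 : ℂ) • ((1 : ℂ), (0 : ℂ)) ∧ (1 : ℂ) ≠ 0 ∧
    Q (0, 1) = (-((Real.pi : ℂ) ^ 2 / 4)) • ((0 : ℂ), (1 : ℂ)) ∧
    -((Real.pi : ℂ) ^ 2 / 4) ≠ 0 ∧
    Q (-((Real.pi : ℂ) ^ 2 / 4), 1) = 0 := by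
  refine ⟨?_, ?_, one_ne_zero, ?_, neg_ne_zero.mpr pi4_ne, ?_⟩
  · rintro ⟨v1, v2⟩ hv
    simpa only [Q, Prod.ext_iff, Prod.smul_mk, smul_eq_mul] using
      char_aux ((Real.pi : ℂ) ^ 2 / 4) v1 v2
  · simp [Q, Prod.ext_iff]
  · simp [Q, Prod.ext_iff]; try ring
  · simp only [Q, Prod.ext_iff, Prod.fst_zero, Prod.snd_zero]
    constructor <;> ring
end
end
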